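/- arXiv:1912.06594 — 2 statements merged into one kernel-verified Lean document; each statement's English description precedes it below -/
import Mathlib

section
/- Reduction of Bayesian compound lotteries: if m is a Bayesian BPA on a finite index set L = {1,…,s} with m({j}) = q_j, and for each j, m_j is a Bayesian conditional BPA on O with m_j({O_i}) = p_i^{(j)}, then the BPA m' = (m ⊕ (⊕_j emb_j(m_j)))↓O obtained via conditional embedding, Dempster combination, and marginalization, is Bayesian with m'({O_i}) = Σ_j q_j p_i^{(j)}. -/
/-- A basic probability assignment on a finite set `S`. -/
def IsBPA {S : Type*} [Fintype S] [DecidableEq S] (m : Finset S → ℝ) : Prop :=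
  m ∅ = 0 ∧ (∀ a, 0 ≤ m a) ∧ (∀ a, m a ≤ 1) ∧ ∑ a : Finset S, m a = 1

/-- A BPA is Bayesian if all its focal sets are singletons. -/
def IsBayesian {S : Type*} [Fintype S] [DecidableEq S] (m : Finset S → ℝ) : Prop :=
  ∀ b : Finset S, 0 < m b → ∃ x : S, b = {x}

/-- The embedded focal set `({j} × b) ∪ ((L \ {j}) × O)` of the conditional embedding. -/
def embSet {L O : Type*} [Fintype L] [Fintype O] [DecidableEq L] [DecidableEq O]
    (j : L) (b : Finset O) : Finset (L × O) :=
  ({j} ×ˢ b) ∪ (({j}ᶜ : Finset L) ×ˢ (Finset.univ : Finset O))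

/-- Intersection of one focal set of the (vacuously extended) first-stage BPA with
focal sets of the conditionally embedded second-stage BPAs. -/
def interSet {L O : Type*} [Fintype L] [Fintype O] [DecidableEq L] [DecidableEq O]
    (a : Finset L) (g : L → Finset O) : Finset (L × O) :=
  (a ×ˢ (Finset.univ : Finset O)) ∩ Finset.univ.inf (fun j => embSet j (g j))

/-- Normalization constant of the (multi-way) Dempster combination of the first-stage
BPA `m` with the conditional embeddings of the second-stage BPAs `mc j`. -/
def KfamConst {L O : Type*} [Fintype L] [Fintype O] [DecidableEq L] [DecidableEq O]
    (m : Finset L → ℝ) (mc : L → Finset O → ℝ) : ℝ :=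
  ∑ a : Finset L, ∑ g : L → Finset O,
    if (interSet a g).Nonempty then m a * ∏ j : L, mc j (g j) else 0

/-- Dempster combination of the first-stage BPA `m` (vacuously extended to `L × O`)
with the conditional embeddings of the second-stage BPAs `mc j`. -/
noncomputable def famJoint {L O : Type*} [Fintype L] [Fintype O] [DecidableEq L] [DecidableEq O]
    (m : Finset L → ℝ) (mc : L → Finset O → ℝ) (c : Finset (L × O)) : ℝ :=
  if c = ∅ then 0
  else (KfamConst m mc)⁻¹ *
    ∑ a : Finset L, ∑ g : L → Finset O,
      if interSet a g = c then m a * ∏ j : L, mc j (g j) else 0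

/-- Marginalization of a BPA on `L × O` to `O`. -/
noncomputable def margSnd {L O : Type*} [Fintype L] [Fintype O] [DecidableEq L] [DecidableEq O]
    (m : Finset (L × O) → ℝ) (b : Finset O) : ℝ :=
  ∑ c ∈ Finset.univ.filter (fun c : Finset (L × O) => c.image Prod.snd = b), m c

/-!
With Bayesian inputs, the only products of focal sets with nonzero mass pair `{k}` with singletons
`{f j}` (one for each `j`), and `({k} × O) ∩ ⋂ⱼ emb_j {f j}` is the single point `(k, f k)`, carrying
mass `q k * ∏ⱼ p j (f j)`. These masses already sum to one, so Dempster's normalization is trivial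
and no conflict arises; marginalizing puts on `{i}` the mass `∑ₖ q k * p k i`, after summing out the
coordinates of `f` other than `f k`.
-/

open Finset

noncomputable def bayesMass {S : Type*} [Fintype S] [DecidableEq S] (w : S → ℝ) (a : Finset S) : ℝ :=
  ∑ x, if a = {x} then w x else 0

section Bayesian

variable {S : Type*} [Fintype S] [DecidableEq S]

theorem bayesMass_singleton (w : S → ℝ) (x : S) : bayesMass w {x} = w x := by
  simp [bayesMass, singleton_inj]

theorem isBayesian_bayesMass (w : S → ℝ) : IsBayesian (bayesMass w) := by
  intro b hb
  by_contra! hb_ne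
  exact hb.ne' (sum_eq_zero fun x _ => if_neg (hb_ne x))

theorem sum_bayesMass_mul (w : S → ℝ) (F : Finset S → ℝ) :
    ∑ a, bayesMass w a * F a = ∑ x, w x * F {x} := by
  simp_rw [bayesMass, sum_mul, ite_mul, zero_mul]
  rw [sum_comm]
  simp

end Bayesian

theorem sum_prod_apply_eq_one {L O : Type*} [Fintype L] [DecidableEq L] [Fintype O]
    (p : L → O → ℝ) (hp1 : ∀ j, ∑ i, p j i = 1) :
    ∑ f : L → O, ∏ j, p j (f j) = 1 := by
  rw [← Fintype.piFinset_univ, ← prod_univ_sum]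
  simp [hp1]

section Product

variable {L O : Type*} [Fintype L] [DecidableEq L] [Fintype O] [DecidableEq O]

theorem prod_bayesMass (p : L → O → ℝ) (g : L → Finset O) :
    ∏ j, bayesMass (p j) (g j)
      = ∑ f : L → O, if g = (fun j => {f j}) then ∏ j, p j (f j) else 0 := by
  simp only [bayesMass]
  rw [prod_univ_sum]
  refine sum_congr (Fintype.piFinset_univ) fun f _ => ?_
  by_cases hg : g = fun j => {f j}
  · simp [hg]
  · obtain ⟨j, hj⟩ := Function.ne_iff.mp hg
    rw [if_neg hg]
    exact prod_eq_zero (mem_univ j) (if_neg hj)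

theorem sum_prod_bayesMass_mul (p : L → O → ℝ) (F : (L → Finset O) → ℝ) :
    ∑ g : L → Finset O, (∏ j, bayesMass (p j) (g j)) * F g
      = ∑ f : L → O, (∏ j, p j (f j)) * F (fun j => {f j}) := by
  simp_rw [prod_bayesMass, sum_mul, ite_mul, zero_mul]
  rw [sum_comm]
  simp

theorem sum_prod_apply_of_apply_eq (p : L → O → ℝ) (hp1 : ∀ j, ∑ i, p j i = 1) (k : L) (i : O) :
    ∑ f : L → O, (if f k = i then ∏ j, p j (f j) else 0) = p k i := by
  let t : L → Finset O := fun j => if j = k then {i} else univ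
  have ht : Fintype.piFinset t = univ.filter (fun f : L → O => f k = i) := by
    ext f
    simp only [Fintype.mem_piFinset, mem_filter, mem_univ, true_and, t]
    refine ⟨fun h => by simpa using h k, fun h j => ?_⟩
    split_ifs with hj
    · subst hj; simpa using h
    · exact mem_univ _
  rw [← sum_filter, ← ht, ← prod_univ_sum,
    prod_eq_single k (fun j _ hj => by simp [t, hj, hp1 j]) (by simp)]
  simp [t]

end Product

section Compound

variable {L O : Type*} [Fintype L] [DecidableEq L] [Fintype O] [DecidableEq O]

theorem interSet_singleton (k : L) (f : L → O) :
    interSet {k} (fun j => ({f j} : Finset O)) = {(k, f k)} := by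
  ext ⟨l, o⟩
  simp only [interSet, embSet, mem_inter, mem_product, mem_singleton, mem_univ, and_true,
    mem_inf, mem_union, mem_compl, Prod.mk.injEq]
  constructor
  · rintro ⟨rfl, h⟩
    simpa using h l
  · rintro ⟨rfl, rfl⟩
    exact ⟨rfl, fun j _ => (em (l = j)).imp (fun h => ⟨h, congrArg f h⟩) id⟩

theorem sum_interSet_bayesMass (q : L → ℝ) (p : L → O → ℝ) (Φ : Finset (L × O) → ℝ) :
    ∑ a, ∑ g : L → Finset O, bayesMass q a * (∏ j, bayesMass (p j) (g j)) * Φ (interSet a g)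
      = ∑ k, ∑ f : L → O, q k * (∏ j, p j (f j)) * Φ {(k, f k)} := by
  simp_rw [mul_assoc, ← mul_sum, sum_bayesMass_mul]
  refine sum_congr rfl fun k _ => ?_
  rw [sum_prod_bayesMass_mul p (fun g => Φ (interSet {k} g))]
  simp_rw [interSet_singleton]

theorem kfamConst_bayesMass (q : L → ℝ) (hq1 : ∑ j, q j = 1)
    (p : L → O → ℝ) (hp1 : ∀ j, ∑ i, p j i = 1) :
    KfamConst (bayesMass q) (fun j => bayesMass (p j)) = 1 := by
  have h := sum_interSet_bayesMass q p (fun c => if c.Nonempty then 1 else 0)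
  simp only [mul_boole, singleton_nonempty, if_true, mul_one] at h
  rw [KfamConst, h]
  simp_rw [← mul_sum, sum_prod_apply_eq_one p hp1, mul_one, hq1]

theorem famJoint_bayesMass (q : L → ℝ) (hq1 : ∑ j, q j = 1)
    (p : L → O → ℝ) (hp1 : ∀ j, ∑ i, p j i = 1) (c : Finset (L × O)) :
    famJoint (bayesMass q) (fun j => bayesMass (p j)) c
      = ∑ k, ∑ f : L → O, if {(k, f k)} = c then q k * ∏ j, p j (f j) else 0 := by
  rw [famJoint]
  split_ifs with hc
  · simp [hc]
  · have h := sum_interSet_bayesMass q p (fun d => if d = c then 1 else 0)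
    simp only [mul_boole] at h
    rw [kfamConst_bayesMass q hq1 p hp1, inv_one, one_mul, h]

theorem margSnd_famJoint_bayesMass (q : L → ℝ) (hq1 : ∑ j, q j = 1)
    (p : L → O → ℝ) (hp1 : ∀ j, ∑ i, p j i = 1) :
    margSnd (famJoint (bayesMass q) (fun j => bayesMass (p j)))
      = bayesMass (fun i => ∑ k, q k * p k i) := by
  funext b
  have marg : margSnd (famJoint (bayesMass q) (fun j => bayesMass (p j))) b
      = ∑ k, ∑ f : L → O, if {f k} = b then q k * ∏ j, p j (f j) else 0 := by
    simp_rw [margSnd, famJoint_bayesMass q hq1 p hp1]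
    rw [sum_comm]
    refine sum_congr rfl fun k _ => ?_
    rw [sum_comm]
    refine sum_congr rfl fun f _ => ?_
    rw [sum_ite_eq]
    simp only [mem_filter, mem_univ, true_and, image_singleton]
  rw [marg]
  by_cases hb : ∃ i, b = {i}
  · obtain ⟨i, rfl⟩ := hb
    simp_rw [bayesMass_singleton, singleton_inj]
    refine sum_congr rfl fun k _ => ?_
    rw [← sum_prod_apply_of_apply_eq p hp1 k i, mul_sum]
    simp_rw [mul_ite, mul_zero]
  · simp only [not_exists] at hb
    simp [bayesMass, hb, fun i => Ne.symm (hb i)]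

end Compound

theorem reduction_bayesian_compound_general {s : ℕ} {O : Type*} [Fintype O] [DecidableEq O]
    (q : Fin s → ℝ) (hq1 : ∑ j, q j = 1)
    (p : Fin s → O → ℝ) (hp1 : ∀ j, ∑ i, p j i = 1) :
    let m : Finset (Fin s) → ℝ := fun a => ∑ j : Fin s, if a = {j} then q j else 0
    let mc : Fin s → Finset O → ℝ := fun j b => ∑ i : O, if b = {i} then p j i else 0
    let m' : Finset O → ℝ := margSnd (famJoint m mc)
    IsBayesian m' ∧ ∀ i : O, m' {i} = ∑ j : Fin s, q j * p j i := by
  intro m mc m'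
  have hm' : m' = bayesMass (fun i => ∑ j, q j * p j i) :=
    margSnd_famJoint_bayesMass q hq1 p hp1
  rw [hm']
  exact ⟨isBayesian_bayesMass _, bayesMass_singleton _⟩

theorem reduction_bayesian_compound {s : ℕ} {O : Type*} [Fintype O] [DecidableEq O]
    (q : Fin s → ℝ) (hq0 : ∀ j, 0 ≤ q j) (hq1 : ∑ j, q j = 1)
    (p : Fin s → O → ℝ) (hp0 : ∀ j i, 0 ≤ p j i) (hp1 : ∀ j, ∑ i, p j i = 1) :
    let m : Finset (Fin s) → ℝ := fun a => ∑ j : Fin s, if a = {j} then q j else 0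
    let mc : Fin s → Finset O → ℝ := fun j b => ∑ i : O, if b = {i} then p j i else 0
    let m' : Finset O → ℝ := margSnd (famJoint m mc)
    IsBayesian m' ∧ ∀ i : O, m' {i} = ∑ j : Fin s, q j * p j i :=
  reduction_bayesian_compound_general q hq1 p hp1
end

section
/- Reduction of a bf lottery to a reference lottery: let m be a BPA on O with focal sets a₁,…,a_k, and for each i let m_i be a BPA on O₂ = {O₁, O_r} with m_i({O₁}) = u_i, m_i({O_r}) = v_i, m_i(O₂) = w_i. Let m' be the Bayesian BPA on L = {1,…,k} with m'({i}) = m(a_i). Then the BPA (m' ⊕ (⊕_i emb_i(m_i)))↓O₂ equals the BPA m̃ on O₂ given by m̃({O₁}) = Σ_i m(a_i)u_i, m̃({O_r}) = Σ_i m(a_i)v_i, m̃(O₂) = Σ_i m(a_i)w_i. -/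
section Dempster

open Finset

variable {L O : Type*} [Fintype L] [Fintype O] [DecidableEq L] [DecidableEq O]

def bayesianOf (μ : L → ℝ) (a : Finset L) : ℝ :=
  ∑ i, if a = {i} then μ i else 0

theorem sum_bayesianOf_mul (μ : L → ℝ) (F : Finset L → ℝ) :
    ∑ a, bayesianOf μ a * F a = ∑ i, μ i * F {i} := by
  simp only [bayesianOf, sum_mul, ite_mul, zero_mul]
  rw [sum_comm]
  simp

theorem mem_interSet (a : Finset L) (g : L → Finset O) (p : L × O) :
    p ∈ interSet a g ↔ p.1 ∈ a ∧ p.2 ∈ g p.1 := by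
  obtain ⟨l, o⟩ := p
  simp only [interSet, embSet, mem_inter, mem_product, mem_univ, and_true, mem_inf, mem_union,
    mem_singleton, mem_compl, true_implies]
  refine and_congr_right fun _ => ⟨fun h => (h l).resolve_right (· rfl) |>.2, fun h j => ?_⟩
  by_cases hj : l = j
  · exact .inl ⟨hj, hj ▸ h⟩
  · exact .inr hj

theorem interSet_singleton_s14 (i : L) (g : L → Finset O) :
    interSet {i} g = {i} ×ˢ g i := by
  ext ⟨l, o⟩
  simp only [mem_interSet, mem_product, mem_singleton]
  constructor <;> rintro ⟨rfl, h⟩ <;> exact ⟨rfl, h⟩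

theorem sum_pi_ite_apply_mul_prod {β : Type*} [Fintype β] (f : L → β → ℝ) (i : L)
    (hf : ∀ j ≠ i, ∑ b, f j b = 1) (P : β → Prop) [DecidablePred P] :
    ∑ g : L → β, (if P (g i) then ∏ j, f j (g j) else 0) = ∑ b, if P b then f i b else 0 := by
  set F : β → ℝ := fun b => if P b then f i b else 0
  have prod_update (g : L → β) :
      ∏ j, Function.update f i F j (g j) = F (g i) * ∏ j ∈ {i}ᶜ, f j (g j) := by
    rw [Fintype.prod_eq_mul_prod_compl i, Function.update_self]
    congr 1
    exact prod_congr rfl fun j hj => by rw [Function.update_of_ne (by simpa using hj)]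
  calc ∑ g : L → β, (if P (g i) then ∏ j, f j (g j) else 0)
      = ∑ g : L → β, ∏ j, Function.update f i F j (g j) := by
        refine sum_congr rfl fun g _ => ?_
        rw [prod_update, Fintype.prod_eq_mul_prod_compl i, ite_mul, zero_mul]
    _ = ∏ j, ∑ b, Function.update f i F j b := (Fintype.prod_sum _).symm
    _ = ∑ b, F b := by
        rw [Fintype.prod_eq_mul_prod_compl i, Function.update_self,
          prod_eq_one fun j hj => ?_, mul_one]
        rw [Function.update_of_ne (by simpa using hj)]
        exact hf j (by simpa using hj)

theorem sum_interSet_bayesianOf (μ : L → ℝ) (mc : L → Finset O → ℝ)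
    (hmc : ∀ j, ∑ b, mc j b = 1) (Q : Finset (L × O) → Prop) [DecidablePred Q] :
    ∑ a, ∑ g : L → Finset O,
        (if Q (interSet a g) then bayesianOf μ a * ∏ j, mc j (g j) else 0)
      = ∑ i, μ i * ∑ b, if Q ({i} ×ˢ b) then mc i b else 0 := by
  simp_rw [← mul_ite_zero, ← mul_sum, sum_bayesianOf_mul, interSet_singleton_s14]
  exact sum_congr rfl fun i _ =>
    congrArg (μ i * ·) (sum_pi_ite_apply_mul_prod mc i (fun j _ => hmc j) (Q <| {i} ×ˢ ·))

theorem KfamConst_bayesianOf (μ : L → ℝ) (hμ : ∑ i, μ i = 1) (mc : L → Finset O → ℝ)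
    (hmc0 : ∀ j, mc j ∅ = 0) (hmc : ∀ j, ∑ b, mc j b = 1) :
    KfamConst (bayesianOf μ) mc = 1 := by
  have nonconflicting (i : L) :
      ∑ b, (if ({i} ×ˢ b : Finset (L × O)).Nonempty then mc i b else 0) = 1 := by
    rw [← hmc i]
    refine sum_congr rfl fun b _ => ?_
    rcases b.eq_empty_or_nonempty with rfl | hb
    · simp [hmc0]
    · simp [hb]
  simp_rw [KfamConst, sum_interSet_bayesianOf μ mc hmc, nonconflicting, mul_one, hμ]

theorem margSnd_famJoint (m : Finset L → ℝ) (mc : L → Finset O → ℝ) {b : Finset O}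
    (hb : b ≠ ∅) :
    margSnd (famJoint m mc) b = (KfamConst m mc)⁻¹ *
      ∑ a, ∑ g : L → Finset O,
        if (interSet a g).image Prod.snd = b then m a * ∏ j, mc j (g j) else 0 := by
  set S := univ.filter fun c : Finset (L × O) => c.image Prod.snd = b
  calc margSnd (famJoint m mc) b
      = ∑ c ∈ S, (KfamConst m mc)⁻¹ *
          ∑ a, ∑ g : L → Finset O, if interSet a g = c then m a * ∏ j, mc j (g j) else 0 := by
        refine sum_congr rfl fun c hc => if_neg fun hc0 => hb ?_
        simpa [S, hc0, eq_comm] using hc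
    _ = (KfamConst m mc)⁻¹ * ∑ a, ∑ g : L → Finset O, ∑ c ∈ S,
          if interSet a g = c then m a * ∏ j, mc j (g j) else 0 := by
        rw [← mul_sum, sum_comm]
        exact congrArg _ (sum_congr rfl fun a _ => sum_comm)
    _ = _ := by simp_rw [sum_ite_eq, S, mem_filter, mem_univ, true_and]

theorem margSnd_famJoint_bayesianOf (μ : L → ℝ) (hμ : ∑ i, μ i = 1) (mc : L → Finset O → ℝ)
    (hmc0 : ∀ j, mc j ∅ = 0) (hmc : ∀ j, ∑ b, mc j b = 1) {b : Finset O} (hb : b ≠ ∅) :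
    margSnd (famJoint (bayesianOf μ) mc) b = ∑ i, μ i * mc i b := by
  rw [margSnd_famJoint _ _ hb, KfamConst_bayesianOf μ hμ mc hmc0 hmc, inv_one, one_mul,
    sum_interSet_bayesianOf μ mc hmc (fun c => c.image Prod.snd = b)]
  simp_rw [product_image_snd (singleton_nonempty _), sum_ite_eq', mem_univ, if_true]

end Dempster

theorem sum_finset_bool {M : Type*} [AddCommMonoid M] (f : Finset Bool → M) :
    ∑ b, f b = f ∅ + f {true} + f {false} + f Finset.univ := by
  rw [show (Finset.univ : Finset (Finset Bool)) = {∅, {true}, {false}, Finset.univ} by decide,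
    Finset.sum_insert (by decide), Finset.sum_insert (by decide), Finset.sum_insert (by decide),
    Finset.sum_singleton]
  simp only [add_assoc]

/-- `O₂ = {O₁, O_r}` is modeled as `Bool`, with `true = O₁` (best) and `false = O_r` (worst). -/
theorem reduction_to_reference_lottery_general {k : ℕ}
    (μ : Fin k → ℝ) (hμ1 : ∑ i, μ i = 1)
    (u v w : Fin k → ℝ)
    (huvw : ∀ i, u i + v i + w i = 1) :
    let m' : Finset (Fin k) → ℝ := fun a => ∑ i : Fin k, if a = {i} then μ i else 0
    let mc : Fin k → Finset Bool → ℝ := fun i b =>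
      if b = {true} then u i
      else if b = {false} then v i
      else if b = Finset.univ then w i
      else 0
    let mt : Finset Bool → ℝ := margSnd (famJoint m' mc)
    mt {true} = ∑ i : Fin k, μ i * u i ∧
      mt {false} = ∑ i : Fin k, μ i * v i ∧
      mt Finset.univ = ∑ i : Fin k, μ i * w i := by
  intro m' mc mt
  have hmc0 (i : Fin k) : mc i ∅ = 0 := by simp +decide [mc]
  have hmc (i : Fin k) : ∑ b, mc i b = 1 := by
    rw [sum_finset_bool, ← huvw i]
    simp +decide [mc]
  have hmt {b : Finset Bool} (hb : b ≠ ∅) : mt b = ∑ i, μ i * mc i b :=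
    margSnd_famJoint_bayesianOf μ hμ1 mc hmc0 hmc hb
  refine ⟨?_, ?_, ?_⟩ <;> rw [hmt (by decide)] <;> simp +decide [mc]

/-- Reduction of a bf lottery to an indifferent bf reference lottery (Theorem 2):
`O₂ = {O₁, O_r}` is modeled as `Bool`, with `true = O₁` (best) and `false = O_r` (worst). -/
theorem reduction_to_reference_lottery {k : ℕ}
    (μ : Fin k → ℝ) (hμ0 : ∀ i, 0 ≤ μ i) (hμ1 : ∑ i, μ i = 1)
    (u v w : Fin k → ℝ) (hu : ∀ i, 0 ≤ u i) (hv : ∀ i, 0 ≤ v i) (hw : ∀ i, 0 ≤ w i)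
    (huvw : ∀ i, u i + v i + w i = 1) :
    let m' : Finset (Fin k) → ℝ := fun a => ∑ i : Fin k, if a = {i} then μ i else 0
    let mc : Fin k → Finset Bool → ℝ := fun i b =>
      if b = {true} then u i
      else if b = {false} then v i
      else if b = Finset.univ then w i
      else 0
    let mt : Finset Bool → ℝ := margSnd (famJoint m' mc)
    mt {true} = ∑ i : Fin k, μ i * u i ∧
      mt {false} = ∑ i : Fin k, μ i * v i ∧
      mt Finset.univ = ∑ i : Fin k, μ i * w i :=
  reduction_to_reference_lottery_general μ hμ1 u v w huvw
end
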